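/- A rational function g ∈ ℂ(t) has a rational antiderivative if and only if for every β ∈ ℂ the residue of g at β is zero. -/

import Mathlib

/-- A rational function `g ∈ ℂ(t)` has a rational antiderivative if it can be written as
`(a′b − ab′)/b²` for polynomials `a, b` with `b ≠ 0`; equivalently, it is the derivative
of the rational function `a/b`. -/
def HasRatAntideriv (g : RatFunc ℂ) : Prop :=
  ∃ a b : Polynomial ℂ, b ≠ 0 ∧
    g = algebraMap (Polynomial ℂ) (RatFunc ℂ) (Polynomial.derivative a * b - a * Polynomial.derivative b) /
        algebraMap (Polynomial ℂ) (RatFunc ℂ) (b ^ 2)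

/-- The residue of a rational function `g` at `β ∈ ℂ`: the coefficient of `(t − β)⁻¹` in the
Laurent expansion of `g` at `β`. -/
noncomputable def ratResidue (g : RatFunc ℂ) (β : ℂ) : ℂ :=
  ((RatFunc.laurent β g : RatFunc ℂ) : LaurentSeries ℂ).coeff (-1)

/-!
Shifting by `RatFunc.laurent β` moves the point `β` to `0`. There, if `b = X ^ k * c` with
`c(0) ≠ 0` and `F = a / c` as a power series, the quotient-rule expression for `(a / b)′` is
`X ^ (-k - 1) * (X * F′ - k * F)`, whose coefficient of `X ^ (-1)` is `k F_k - k F_k = 0`.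
Conversely, over an algebraically closed field of characteristic zero, a partial-fraction
decomposition writes `g` as a polynomial plus terms `c * (X - β) ^ (-n)`; all of these are
derivatives except those with `n = 1`, whose coefficients are the residues.
-/

open Polynomial
open scoped LaurentSeries PowerSeries

variable {K : Type*} [Field K]

theorem PowerSeries.coeff_X_mul_derivative_sub_natCast_mul {R : Type*} [CommRing R] (F : R⟦X⟧)
    (n : ℕ) : PowerSeries.coeff n (PowerSeries.X * d⁄dX R F - (n : R⟦X⟧) * F) = 0 := by
  cases n with
  | zero => simp
  | succ n =>
    rw [map_sub, PowerSeries.coeff_succ_X_mul, PowerSeries.coeff_derivative,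
      ← map_natCast PowerSeries.C, PowerSeries.coeff_C_mul]
    push_cast
    ring

theorem derivative_taylor {R : Type*} [CommSemiring R] (β : R) (p : R[X]) :
    derivative (taylor β p) = taylor β (derivative p) := by
  simp [taylor_apply, derivative_comp]

theorem coe_div_X_pow_mul {p q : K[X]} (hq : q.coeff 0 ≠ 0) (k : ℕ) :
    ((algebraMap K[X] (RatFunc K) p / algebraMap K[X] (RatFunc K) (X ^ k * q) : RatFunc K) :
        K⸨X⸩) =
      HahnSeries.single (-(k : ℤ)) 1 * (((p : K⟦X⟧) * (q : K⟦X⟧)⁻¹ : K⟦X⟧) : K⸨X⸩) := by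
  have hq0 : q ≠ 0 := by rintro rfl; exact hq (coeff_zero 0)
  have hqu : (q : K⟦X⟧)⁻¹ * (q : K⟦X⟧) = 1 :=
    PowerSeries.inv_mul_cancel _ (by rwa [Polynomial.constantCoeff_coe])
  have hden : algebraMap K[X] K⸨X⸩ (X ^ k * q) =
      HahnSeries.single (k : ℤ) 1 * ((q : K⟦X⟧) : K⸨X⸩) := by
    simp
  rw [RatFunc.algebraMap_apply_div, div_eq_iff, hden, mul_mul_mul_comm,
    HahnSeries.single_mul_single, neg_add_cancel, mul_one, HahnSeries.single_zero_one, one_mul,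
    ← map_mul, mul_assoc, hqu, mul_one]
  · simp
  · exact (map_ne_zero_iff _ (algebraMap_hahnSeries_injective ℤ)).2
      (mul_ne_zero (pow_ne_zero _ X_ne_zero) hq0)

noncomputable def residueAt (β : K) : RatFunc K →+ K :=
  AddMonoidHom.mk' (fun f ↦ ((RatFunc.laurent β f : RatFunc K) : K⸨X⸩).coeff (-1))
    fun f g ↦ by simp only [map_add, HahnSeries.coeff_add]

theorem residueAt_apply (β : K) (f : RatFunc K) :
    residueAt β f = ((RatFunc.laurent β f : RatFunc K) : K⸨X⸩).coeff (-1) := rfl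

theorem residueAt_eq_residueAt_zero_laurent (β : K) (f : RatFunc K) :
    residueAt β f = residueAt 0 (RatFunc.laurent β f) := by
  rw [residueAt_apply, residueAt_apply, RatFunc.laurent_at_zero]

theorem residueAt_zero_div_X_pow_succ_mul {p q : K[X]} (hq : q.coeff 0 ≠ 0) (k : ℕ) :
    residueAt 0 (algebraMap K[X] (RatFunc K) p / algebraMap K[X] (RatFunc K) (X ^ (k + 1) * q)) =
      PowerSeries.coeff k ((p : K⟦X⟧) * (q : K⟦X⟧)⁻¹) := by
  rw [residueAt_apply, RatFunc.laurent_at_zero, coe_div_X_pow_mul hq,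
    show (-1 : ℤ) = k + -((k + 1 : ℕ) : ℤ) by push_cast; ring, HahnSeries.coeff_single_mul_add,
    one_mul, LaurentSeries.coeff_coe_powerSeries]

theorem residueAt_zero_div_of_coeff_zero_ne_zero (p : K[X]) {q : K[X]} (hq : q.coeff 0 ≠ 0) :
    residueAt 0 (algebraMap K[X] (RatFunc K) p / algebraMap K[X] (RatFunc K) q) = 0 := by
  rw [← one_mul q, ← pow_zero X, residueAt_apply, RatFunc.laurent_at_zero, coe_div_X_pow_mul hq,
    Nat.cast_zero, neg_zero, HahnSeries.single_zero_one, one_mul, PowerSeries.coeff_coe,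
    if_pos (by norm_num)]

theorem residueAt_div_of_eval_ne_zero (p : K[X]) {q : K[X]} {β : K} (hq : q.eval β ≠ 0) :
    residueAt β (algebraMap K[X] (RatFunc K) p / algebraMap K[X] (RatFunc K) q) = 0 := by
  rw [residueAt_eq_residueAt_zero_laurent, RatFunc.laurent_div]
  exact residueAt_zero_div_of_coeff_zero_ne_zero _ (by rwa [taylor_coeff_zero])

theorem residueAt_algebraMap (β : K) (p : K[X]) :
    residueAt β (algebraMap K[X] (RatFunc K) p) = 0 := by
  simpa using residueAt_div_of_eval_ne_zero (β := β) p (q := 1) (by simp)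

theorem residueAt_div_X_sub_C_pow_succ (β : K) (r : K[X]) (m : ℕ) :
    residueAt β (algebraMap K[X] (RatFunc K) r /
      algebraMap K[X] (RatFunc K) ((X - C β) ^ (m + 1))) = (taylor β r).coeff m := by
  have hshift : taylor β ((X - C β) ^ (m + 1)) = X ^ (m + 1) * 1 := by
    simp [taylor_pow, taylor_X, taylor_C]
  rw [residueAt_eq_residueAt_zero_laurent, RatFunc.laurent_div, hshift,
    residueAt_zero_div_X_pow_succ_mul (by simp), Polynomial.coe_one, inv_one, mul_one,
    Polynomial.coeff_coe]

noncomputable def quotientRule (a b : K[X]) : RatFunc K :=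
  algebraMap K[X] (RatFunc K) (derivative a * b - a * derivative b) /
    algebraMap K[X] (RatFunc K) (b ^ 2)

theorem laurent_quotientRule (β : K) (a b : K[X]) :
    RatFunc.laurent β (quotientRule a b) = quotientRule (taylor β a) (taylor β b) := by
  rw [quotientRule, quotientRule, RatFunc.laurent_div, map_sub, taylor_mul, taylor_mul, taylor_pow,
    derivative_taylor, derivative_taylor]

theorem residueAt_zero_quotientRule_X_pow_succ_mul (a : K[X]) {c : K[X]} (hc : c.coeff 0 ≠ 0)
    (e : ℕ) : residueAt 0 (quotientRule a (X ^ (e + 1) * c)) = 0 := by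
  set N := X * derivative a * c - ((e + 1 : ℕ) : K[X]) * a * c - X * a * derivative c
  have hnum : derivative a * (X ^ (e + 1) * c) - a * derivative (X ^ (e + 1) * c) = X ^ e * N := by
    rw [derivative_mul, derivative_X_pow]
    simp only [N, map_natCast, add_tsub_cancel_right]
    ring
  have hden : (X ^ (e + 1) * c) ^ 2 = X ^ (e + e + 1 + 1) * c ^ 2 := by ring
  have hc2 : (c ^ 2).coeff 0 ≠ 0 := by
    rw [pow_two, mul_coeff_zero]
    exact mul_ne_zero hc hc
  have hc' : (c : K⟦X⟧) * (c : K⟦X⟧)⁻¹ = 1 :=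
    PowerSeries.mul_inv_cancel _ (by rwa [Polynomial.constantCoeff_coe])
  have hinv : ((c ^ 2 : K[X]) : K⟦X⟧)⁻¹ = (c : K⟦X⟧)⁻¹ ^ 2 := by
    refine ((PowerSeries.eq_inv_iff_mul_eq_one ?_).2 ?_).symm
    · rwa [Polynomial.constantCoeff_coe]
    · push_cast
      linear_combination ((c : K⟦X⟧) * (c : K⟦X⟧)⁻¹ + 1) * hc'
  set F : K⟦X⟧ := a * (c : K⟦X⟧)⁻¹
  have hN : (N : K⟦X⟧) * ((c ^ 2 : K[X]) : K⟦X⟧)⁻¹ =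
      PowerSeries.X * d⁄dX K F - ((e + 1 : ℕ) : K⟦X⟧) * F := by
    simp only [hinv, F, N, Derivation.leibniz, PowerSeries.derivative_inv',
      PowerSeries.derivative_coe, smul_eq_mul]
    have he : ((e : K[X]) : K⟦X⟧) = e := map_natCast Polynomial.coeToPowerSeries.ringHom e
    push_cast [he]
    linear_combination (PowerSeries.X * (derivative a : K⟦X⟧) * (c : K⟦X⟧)⁻¹ -
      ((e : K⟦X⟧) + 1) * a * (c : K⟦X⟧)⁻¹) * hc'
  rw [quotientRule, hnum, hden, residueAt_zero_div_X_pow_succ_mul hc2, Polynomial.coe_mul,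
    Polynomial.coe_pow, Polynomial.coe_X, mul_assoc, show e + e + 1 = e + 1 + e by ring,
    PowerSeries.coeff_X_pow_mul, hN, PowerSeries.coeff_X_mul_derivative_sub_natCast_mul]

theorem residueAt_zero_quotientRule (a : K[X]) {b : K[X]} (hb : b ≠ 0) :
    residueAt 0 (quotientRule a b) = 0 := by
  obtain ⟨c, hbc, hc⟩ := b.exists_eq_pow_rootMultiplicity_mul_and_not_dvd hb 0
  rw [C_0, sub_zero] at hbc hc
  rw [X_dvd_iff] at hc
  rw [hbc]
  cases b.rootMultiplicity 0 with
  | zero =>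
    rw [pow_zero, one_mul]
    refine residueAt_zero_div_of_coeff_zero_ne_zero _ ?_
    rw [pow_two, mul_coeff_zero]
    exact mul_ne_zero hc hc
  | succ e => exact residueAt_zero_quotientRule_X_pow_succ_mul a hc e

theorem residueAt_quotientRule (β : K) (a : K[X]) {b : K[X]} (hb : b ≠ 0) :
    residueAt β (quotientRule a b) = 0 := by
  rw [residueAt_eq_residueAt_zero_laurent, laurent_quotientRule]
  exact residueAt_zero_quotientRule _ ((taylor_eq_zero β b).not.2 hb)

theorem quotientRule_add {a₁ b₁ a₂ b₂ : K[X]} (hb₁ : b₁ ≠ 0) (hb₂ : b₂ ≠ 0) :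
    quotientRule a₁ b₁ + quotientRule a₂ b₂ = quotientRule (a₁ * b₂ + a₂ * b₁) (b₁ * b₂) := by
  rw [quotientRule, quotientRule, quotientRule, div_add_div _ _ , div_eq_div_iff]
  · simp only [← map_mul, ← map_add]
    congr 1
    simp only [derivative_add, derivative_mul]
    ring
  all_goals simp [hb₁, hb₂]

theorem smul_quotientRule (c : K) (a b : K[X]) :
    c • quotientRule a b = quotientRule (C c * a) b := by
  rw [quotientRule, quotientRule, Algebra.smul_def,
    IsScalarTower.algebraMap_apply K K[X] (RatFunc K), mul_div_assoc', ← map_mul, algebraMap_eq]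
  congr 2
  simp only [derivative_mul, derivative_C, zero_mul, zero_add]
  ring

variable (K) in
def derivRange : Submodule K (RatFunc K) where
  carrier := {g | ∃ a b : K[X], b ≠ 0 ∧ g = quotientRule a b}
  add_mem' := by
    rintro _ _ ⟨a₁, b₁, hb₁, rfl⟩ ⟨a₂, b₂, hb₂, rfl⟩
    exact ⟨_, _, mul_ne_zero hb₁ hb₂, quotientRule_add hb₁ hb₂⟩
  zero_mem' := ⟨0, 1, one_ne_zero, by simp [quotientRule]⟩
  smul_mem' := by
    rintro c _ ⟨a, b, hb, rfl⟩
    exact ⟨_, _, hb, smul_quotientRule c a b⟩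

theorem residueAt_eq_zero_of_mem_derivRange {g : RatFunc K} (hg : g ∈ derivRange K) (β : K) :
    residueAt β g = 0 := by
  obtain ⟨a, b, hb, rfl⟩ := hg
  exact residueAt_quotientRule β a hb

theorem exists_derivative_eq [CharZero K] (p : K[X]) : ∃ P : K[X], derivative P = p := by
  induction p using Polynomial.induction_on' with
  | add p q hp hq =>
    obtain ⟨P, rfl⟩ := hp
    obtain ⟨Q, rfl⟩ := hq
    exact ⟨P + Q, derivative_add⟩
  | monomial n c =>
    refine ⟨monomial (n + 1) (c / (n + 1)), ?_⟩
    rw [derivative_monomial, Nat.add_sub_cancel]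
    congr 1
    push_cast
    field_simp

theorem algebraMap_mem_derivRange [CharZero K] (p : K[X]) :
    algebraMap K[X] (RatFunc K) p ∈ derivRange K := by
  obtain ⟨P, hP⟩ := exists_derivative_eq p
  exact ⟨P, 1, one_ne_zero, by simp [quotientRule, hP]⟩

theorem inv_X_sub_C_pow_mem_derivRange [CharZero K] (β : K) (n : ℕ) :
    (algebraMap K[X] (RatFunc K) ((X - C β) ^ (n + 2)))⁻¹ ∈ derivRange K := by
  have hne : ∀ k, algebraMap K[X] (RatFunc K) ((X - C β) ^ k) ≠ 0 := fun k ↦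
    (map_ne_zero_iff _ (IsFractionRing.injective K[X] (RatFunc K))).2
      (pow_ne_zero _ (X_sub_C_ne_zero β))
  refine ⟨C (-((n : K) + 1)⁻¹), (X - C β) ^ (n + 1), pow_ne_zero _ (X_sub_C_ne_zero β), ?_⟩
  rw [quotientRule, ← pow_mul, ← one_div, div_eq_div_iff (hne _) (hne _), one_mul, ← map_mul]
  congr 1
  rw [derivative_C, derivative_X_sub_C_pow, zero_mul, zero_sub, add_tsub_cancel_right]
  have hC : C ((n : K) + 1)⁻¹ * C ((n : K) + 1) = 1 := by
    rw [← C_mul, inv_mul_cancel₀ n.cast_add_one_ne_zero, C_1]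
  simp only [C_neg, Nat.cast_add, Nat.cast_one]
  linear_combination (-(X - C β) ^ ((n + 1) * 2)) * hC

theorem div_X_sub_C_pow_succ_mem_derivRange [CharZero K] {r : K[X]} {m : ℕ} (β : K)
    (hr : r.natDegree ≤ m) (hres : (taylor β r).coeff m = 0) :
    algebraMap K[X] (RatFunc K) r / algebraMap K[X] (RatFunc K) ((X - C β) ^ (m + 1)) ∈
      derivRange K := by
  have hexp : r = ∑ j ∈ Finset.range m, C ((taylor β r).coeff j) * (X - C β) ^ j := by
    conv_lhs => rw [← sum_taylor_eq r β]
    rw [sum_over_range' _ (by simp) (m + 1) (by rw [natDegree_taylor]; omega),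
      Finset.sum_range_succ, hres, C_0, zero_mul, add_zero]
  have hX : algebraMap K[X] (RatFunc K) (X - C β) ≠ 0 :=
    (map_ne_zero_iff _ (IsFractionRing.injective K[X] (RatFunc K))).2 (X_sub_C_ne_zero β)
  have hterm : ∀ j ∈ Finset.range m,
      algebraMap K[X] (RatFunc K) (C ((taylor β r).coeff j) * (X - C β) ^ j) /
        algebraMap K[X] (RatFunc K) ((X - C β) ^ (m + 1)) =
      (taylor β r).coeff j • (algebraMap K[X] (RatFunc K) ((X - C β) ^ (m - 1 - j + 2)))⁻¹ := by
    intro j hj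
    have hj : j < m := Finset.mem_range.1 hj
    rw [Algebra.smul_def, IsScalarTower.algebraMap_apply K K[X] (RatFunc K), algebraMap_eq,
      map_mul, mul_div_assoc, show m + 1 = m - 1 - j + 2 + j by omega, pow_add, map_mul, map_pow,
      map_pow, div_mul_cancel_right₀ (pow_ne_zero _ hX)]
  rw [hexp, map_sum, Finset.sum_div, Finset.sum_congr rfl hterm]
  exact Submodule.sum_mem _ fun j _ ↦ Submodule.smul_mem _ _ (inv_X_sub_C_pow_mem_derivRange β _)

theorem exists_eq_algebraMap_add_sum_div_X_sub_C_pow [IsAlgClosed K] (g : RatFunc K) :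
    ∃ (s : Finset K) (m : K → ℕ) (quo : K[X]) (r : K → K[X]),
      (∀ β ∈ s, (r β).natDegree ≤ m β) ∧
      g = algebraMap K[X] (RatFunc K) quo + ∑ β ∈ s, algebraMap K[X] (RatFunc K) (r β) /
        algebraMap K[X] (RatFunc K) ((X - C β) ^ (m β + 1)) := by
  classical
  set s := g.denom.roots.toFinset
  have hmult : ∀ β ∈ s, g.denom.rootMultiplicity β - 1 + 1 = g.denom.rootMultiplicity β :=
    fun β hβ ↦ Nat.sub_add_cancel ((rootMultiplicity_pos g.denom_ne_zero).2
      (isRoot_of_mem_roots (Multiset.mem_toFinset.1 hβ)))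
  have hprod : ∏ β ∈ s, (X - C β) ^ g.denom.rootMultiplicity β = g.denom := by
    conv_rhs => rw [(IsAlgClosed.splits g.denom).eq_prod_roots_of_monic g.monic_denom]
    rw [Finset.prod_multiset_map_count]
    exact Finset.prod_congr rfl fun β _ ↦ by rw [count_roots]
  obtain ⟨quo, r, hdeg, hsum⟩ := div_prod_eq_quo_add_sum_rem_div (K := RatFunc K) g.num
    (fun β _ ↦ (monic_X_sub_C β).pow (g.denom.rootMultiplicity β))
    fun β _ γ _ hβγ ↦ (pairwise_coprime_X_sub_C Function.injective_id hβγ).pow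
  rw [← map_prod, hprod, RatFunc.num_div_denom] at hsum
  refine ⟨s, fun β ↦ g.denom.rootMultiplicity β - 1, quo, r, fun β hβ ↦ ?_,
    hsum.trans (congrArg _ (Finset.sum_congr rfl fun β hβ ↦ by rw [hmult β hβ]))⟩
  have := hdeg β hβ
  rw [degree_pow, degree_X_sub_C, nsmul_one, ← hmult β hβ] at this
  exact natDegree_le_iff_degree_le.2 (Order.le_of_lt_succ this)

theorem mem_derivRange_of_forall_residueAt_eq_zero [IsAlgClosed K] [CharZero K] {g : RatFunc K}
    (hg : ∀ β, residueAt β g = 0) : g ∈ derivRange K := by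
  obtain ⟨s, m, quo, r, hr, rfl⟩ := exists_eq_algebraMap_add_sum_div_X_sub_C_pow g
  refine add_mem (algebraMap_mem_derivRange quo)
    (Submodule.sum_mem _ fun β hβ ↦ div_X_sub_C_pow_succ_mem_derivRange β (hr β hβ) ?_)
  rw [← residueAt_div_X_sub_C_pow_succ, ← hg β, map_add, map_sum, residueAt_algebraMap, zero_add,
    Finset.sum_eq_single_of_mem β hβ]
  intro γ _ hγβ
  refine residueAt_div_of_eval_ne_zero _ ?_
  simpa [sub_eq_zero] using hγβ.symm

theorem hasRatAntideriv_iff_mem_derivRange (g : RatFunc ℂ) :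
    HasRatAntideriv g ↔ g ∈ derivRange ℂ := Iff.rfl

theorem ratResidue_eq_residueAt (g : RatFunc ℂ) (β : ℂ) : ratResidue g β = residueAt β g := rfl

/-- A rational function `g ∈ ℂ(t)` has a rational antiderivative if and only if
for every `β ∈ ℂ` the residue of `g` at `β` is zero. -/
theorem hasRatAntideriv_iff_residues_eq_zero (g : RatFunc ℂ) :
    HasRatAntideriv g ↔ ∀ β : ℂ, ratResidue g β = 0 := by
  simp only [hasRatAntideriv_iff_mem_derivRange, ratResidue_eq_residueAt]
  exact ⟨residueAt_eq_zero_of_mem_derivRange, mem_derivRange_of_forall_residueAt_eq_zero⟩
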